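/- arXiv:2211.06999 — 3 statements merged into one kernel-verified Lean document; each statement's English description precedes it below -/
import Mathlib

section
/- Curve-degree of x^{2n} on the quadratic graph y = φ(x), deg φ = 2 (degree claim underlying Proposition 4.1, case m = 1, d = 2): Suppose Polynomial.degree φ = 2 and let n ≥ 1. Then: (a) there exists Q ∈ R with totalDegree Q ≤ n and x^(2n) − Q ∈ I_1; and (b) for every Q ∈ R with x^(2n) − Q ∈ I_1, one has n ≤ totalDegree Q. Hence the minimal degree of x^{2n} on the curve y = φ(x) equals n. -/
/-!
Write `φ = c x² + ψ` with `c ≠ 0` and `deg ψ ≤ 1`. Modulo the ideal, `c x² ≡ y - ψ(x)`, so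
`x^{2n} ≡ c⁻ⁿ (y - ψ(x))ⁿ`, which has total degree at most `n`. Conversely, the substitution
`x ↦ t`, `y ↦ φ(t)` kills the ideal, sends `x^{2n}` to `t^{2n}` and at most doubles total degrees,
so every representative of `x^{2n}` has total degree at least `n`.
-/

open MvPolynomial

namespace MvPolynomial

variable {R σ : Type*} [CommSemiring R]

theorem totalDegree_aeval_X_le (i : σ) (p : Polynomial R) :
    (Polynomial.aeval (X i : MvPolynomial σ R) p).totalDegree ≤ p.natDegree := by
  rw [Polynomial.aeval_eq_sum_range]
  refine totalDegree_finsetSum_le fun k hk => ?_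
  rw [X_pow_eq_monomial, smul_monomial, smul_eq_mul, mul_one]
  refine (totalDegree_monomial_le _ _).trans ?_
  simpa [Nat.lt_succ_iff] using hk

theorem natDegree_aeval_le_mul_totalDegree {f : σ → Polynomial R} {k : ℕ}
    (hf : ∀ i, (f i).natDegree ≤ k) (Q : MvPolynomial σ R) :
    (aeval f Q).natDegree ≤ k * Q.totalDegree := by
  conv_lhs => rw [Q.as_sum]
  rw [map_sum]
  refine Polynomial.natDegree_sum_le_of_forall_le _ _ fun d hd => ?_
  rw [aeval_monomial, Polynomial.algebraMap_eq]
  refine (Polynomial.natDegree_C_mul_le _ _).trans ?_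
  calc (d.prod fun i e => f i ^ e).natDegree
      ≤ d.sum fun i e => (f i ^ e).natDegree := Polynomial.natDegree_prod_le _ _
    _ ≤ d.sum fun _ e => k * e :=
        Finset.sum_le_sum fun i _ => Polynomial.natDegree_pow_le.trans (by nlinarith [hf i])
    _ = k * d.sum fun _ e => e := by rw [Finsupp.mul_sum]
    _ ≤ k * Q.totalDegree := Nat.mul_le_mul_left _ (le_totalDegree hd)

end MvPolynomial

theorem sub_dvd_pow_sub_inv_smul_pow {K A : Type*} [Field K] [CommRing A] [Algebra K A]
    {c : K} (hc : c ≠ 0) (a b : A) (n : ℕ) :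
    c • a - b ∣ a ^ n - (c ^ n)⁻¹ • b ^ n := by
  have : a ^ n - (c ^ n)⁻¹ • b ^ n = (c ^ n)⁻¹ • ((c • a) ^ n - b ^ n) := by
    rw [smul_pow, smul_sub, inv_smul_smul₀ (pow_ne_zero n hc)]
  rw [this, Algebra.smul_def (c ^ n)⁻¹]
  exact Dvd.dvd.mul_left (sub_dvd_pow_sub_pow (c • a) b n) _

section GraphCurve

variable {R : Type*} [CommRing R] (φ : Polynomial R)

theorem span_graph_le_ker_aeval :
    Ideal.span {X 1 - Polynomial.aeval (X 0 : MvPolynomial (Fin 2) R) φ} ≤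
      RingHom.ker (aeval ![Polynomial.X, φ]) := by
  rw [Ideal.span_singleton_le_iff_mem, RingHom.mem_ker, map_sub,
    ← Polynomial.aeval_algHom_apply]
  simp

theorem le_mul_totalDegree_of_X_pow_sub_mem_span_graph [Nontrivial R] {d k : ℕ}
    (hd : 1 ≤ d) (hφ : φ.natDegree ≤ d) {Q : MvPolynomial (Fin 2) R}
    (hQ : X 0 ^ k - Q ∈ Ideal.span {X 1 - Polynomial.aeval (X 0) φ}) :
    k ≤ d * Q.totalDegree := by
  have hker := span_graph_le_ker_aeval φ hQ
  rw [RingHom.mem_ker, map_sub, sub_eq_zero, map_pow, aeval_X] at hker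
  calc k = (aeval ![Polynomial.X, φ] Q).natDegree := by simp [← hker]
    _ ≤ d * Q.totalDegree := natDegree_aeval_le_mul_totalDegree
        (fun i => by fin_cases i <;> simp [hd, hφ]) Q

end GraphCurve

theorem exists_totalDegree_le_X_pow_two_mul_sub_mem_span_graph {K : Type*} [Field K]
    {φ : Polynomial K} (hφ : φ.natDegree = 2) (n : ℕ) :
    ∃ Q : MvPolynomial (Fin 2) K, Q.totalDegree ≤ n ∧
      X 0 ^ (2 * n) - Q ∈ Ideal.span {X 1 - Polynomial.aeval (X 0) φ} := by
  set c := φ.leadingCoeff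
  set Ψ : MvPolynomial (Fin 2) K := Polynomial.aeval (X 0) φ.eraseLead
  have hc : c ≠ 0 := Polynomial.leadingCoeff_ne_zero.mpr (Polynomial.ne_zero_of_natDegree_gt
    (hφ ▸ two_pos))
  have hΨ : Ψ.totalDegree ≤ 1 :=
    (totalDegree_aeval_X_le 0 _).trans (by have := φ.eraseLead_natDegree_le; omega)
  have hgraph : X 1 - Polynomial.aeval (X 0) φ = -(c • X 0 ^ 2 - (X 1 - Ψ)) := by
    conv_lhs => rw [← φ.eraseLead_add_C_mul_X_pow, hφ]
    simp only [map_add, map_mul, Polynomial.aeval_C, Polynomial.aeval_X, map_pow,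
      Algebra.smul_def, Ψ]
    ring
  refine ⟨(c ^ n)⁻¹ • (X 1 - Ψ) ^ n, ?_, ?_⟩
  · calc ((c ^ n)⁻¹ • (X 1 - Ψ) ^ n).totalDegree ≤ ((X 1 - Ψ) ^ n).totalDegree :=
          totalDegree_smul_le _ _
      _ ≤ n * (X 1 - Ψ).totalDegree := totalDegree_pow _ _
      _ ≤ n * 1 := Nat.mul_le_mul_left _ <| (totalDegree_sub _ _).trans <|
          max_le (totalDegree_X _).le hΨ
      _ = n := mul_one n
  · rw [Ideal.mem_span_singleton, hgraph, neg_dvd, pow_mul]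
    exact sub_dvd_pow_sub_inv_smul_pow hc _ _ n

theorem curve_degree_x_pow_two_n_m1_d2_general
    (φ : Polynomial ℝ) (hφ : φ.degree = 2) (n : ℕ) :
    (∃ Q : MvPolynomial (Fin 2) ℝ, Q.totalDegree ≤ n ∧
      (MvPolynomial.X 0 : MvPolynomial (Fin 2) ℝ) ^ (2 * n) - Q ∈
        Ideal.span {(MvPolynomial.X 1 : MvPolynomial (Fin 2) ℝ) ^ 1 -
          Polynomial.aeval (MvPolynomial.X 0 : MvPolynomial (Fin 2) ℝ) φ}) ∧
    (∀ Q : MvPolynomial (Fin 2) ℝ,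
      (MvPolynomial.X 0 : MvPolynomial (Fin 2) ℝ) ^ (2 * n) - Q ∈
        Ideal.span {(MvPolynomial.X 1 : MvPolynomial (Fin 2) ℝ) ^ 1 -
          Polynomial.aeval (MvPolynomial.X 0 : MvPolynomial (Fin 2) ℝ) φ} →
      n ≤ Q.totalDegree) := by
  have hφ₂ : φ.natDegree = 2 := Polynomial.natDegree_eq_of_degree_eq_some hφ
  simp only [pow_one]
  refine ⟨exists_totalDegree_le_X_pow_two_mul_sub_mem_span_graph hφ₂ n, fun Q hQ => ?_⟩
  have := le_mul_totalDegree_of_X_pow_sub_mem_span_graph φ one_le_two hφ₂.le hQ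
  omega

/-- The minimal degree of `x^{2n}` on the quadratic graph `y = φ(x)`,
`deg φ = 2`, equals `n`. -/
theorem curve_degree_x_pow_two_n_m1_d2
    (φ : Polynomial ℝ) (hφ : φ.degree = 2) (n : ℕ) (hn : 1 ≤ n) :
    (∃ Q : MvPolynomial (Fin 2) ℝ, Q.totalDegree ≤ n ∧
      (MvPolynomial.X 0 : MvPolynomial (Fin 2) ℝ) ^ (2 * n) - Q ∈
        Ideal.span {(MvPolynomial.X 1 : MvPolynomial (Fin 2) ℝ) ^ 1 -
          Polynomial.aeval (MvPolynomial.X 0 : MvPolynomial (Fin 2) ℝ) φ}) ∧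
    (∀ Q : MvPolynomial (Fin 2) ℝ,
      (MvPolynomial.X 0 : MvPolynomial (Fin 2) ℝ) ^ (2 * n) - Q ∈
        Ideal.span {(MvPolynomial.X 1 : MvPolynomial (Fin 2) ℝ) ^ 1 -
          Polynomial.aeval (MvPolynomial.X 0 : MvPolynomial (Fin 2) ℝ) φ} →
      n ≤ Q.totalDegree) :=
  curve_degree_x_pow_two_n_m1_d2_general φ hφ n
end

section
/- Curve-degree of x^{3n} on the cubic curve y² = φ(x), deg φ = 3 (degree claim underlying Proposition 4.1, cubic case): Suppose Polynomial.degree φ = 3 and let n ≥ 1. Then: (a) there exists Q ∈ R with totalDegree Q ≤ 2n and x^(3n) − Q ∈ I_2; and (b) for every Q ∈ R with x^(3n) − Q ∈ I_2, one has 2n ≤ totalDegree Q. Hence the minimal degree of x^{3n} on the curve y² = φ(x) equals 2n. -/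
/-!
Modulo `y ^ m - φ(x)` every bivariate polynomial has a unique normal form `∑_{i<m} aᵢ(x) yⁱ`.
The coefficient `a₀` is linear, vanishes on the ideal, fixes `x ^ k`, and sends `x ^ a y ^ b`
to `x ^ a φ ^ (b / m)` or `0`; hence `m · deg a₀(P) ≤ deg φ · totalDegree P` once `m ≤ deg φ`,
and any representative of `x ^ (n deg φ)` has total degree at least `m n`. Conversely, writing
`φ = c x ^ d + r` with `deg r < d`, we have `x ^ d ≡ c⁻¹ (y ^ m - r(x))`, whose `n`-th power has
total degree at most `n · max m (d - 1)`; for `m = 2`, `d = 3` both bounds are `2 n`.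
-/

open Polynomial
open scoped Polynomial.Bivariate

theorem Polynomial.modByMonic_X_pow_sub_C_C_mul_X_pow {S : Type*} [CommRing S] [Nontrivial S]
    {m : ℕ} (hm : 0 < m) (a p : S) (b : ℕ) :
    (C p * X ^ b) %ₘ (X ^ m - C a) = C (p * a ^ (b / m)) * X ^ (b % m) := by
  have hdvd : X ^ m - C a ∣ C p * X ^ b - C (p * a ^ (b / m)) * X ^ (b % m) := by
    have : C p * X ^ b - C (p * a ^ (b / m)) * X ^ (b % m)
        = C p * X ^ (b % m) * ((X ^ m) ^ (b / m) - C a ^ (b / m)) := by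
      set q := b / m
      set r := b % m
      rw [← Nat.div_add_mod b m]
      simp only [map_mul, map_pow]
      ring
    rw [this]
    exact dvd_mul_of_dvd_right (sub_dvd_pow_sub_pow _ _ _) _
  rw [modByMonic_eq_of_dvd_sub (monic_X_pow_sub_C a hm.ne') hdvd,
    (modByMonic_eq_self_iff (monic_X_pow_sub_C a hm.ne')).2]
  rw [degree_X_pow_sub_C hm]
  exact (degree_C_mul_X_pow_le _ _).trans_lt (by exact_mod_cast Nat.mod_lt b hm)

namespace Superelliptic

variable {R : Type*} [CommRing R]

noncomputable def curveIdeal (φ : R[X]) (m : ℕ) : Ideal (MvPolynomial (Fin 2) R) :=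
  Ideal.span {MvPolynomial.X 1 ^ m - aeval (MvPolynomial.X 0) φ}

noncomputable def toBivariate : MvPolynomial (Fin 2) R →ₐ[R] R[X][Y] :=
  MvPolynomial.aeval ![C X, Y]

@[simp]
lemma toBivariate_X_zero : toBivariate (MvPolynomial.X 0 : MvPolynomial (Fin 2) R) = C X := by
  simp [toBivariate]

@[simp]
lemma toBivariate_X_one : toBivariate (MvPolynomial.X 1 : MvPolynomial (Fin 2) R) = Y := by
  simp [toBivariate]

lemma toBivariate_aeval_X_zero (φ : R[X]) :
    toBivariate (aeval (MvPolynomial.X 0 : MvPolynomial (Fin 2) R) φ) = C φ := by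
  rw [← aeval_algHom_apply, toBivariate_X_zero, ← algebraMap_eq, aeval_algebraMap_apply,
    aeval_X_left_apply, algebraMap_eq]

lemma toBivariate_monomial (s : Fin 2 →₀ ℕ) (c : R) :
    toBivariate (MvPolynomial.monomial s c) = C (C c * X ^ s 0) * Y ^ s 1 := by
  simp [toBivariate, MvPolynomial.aeval_monomial, Finsupp.prod_fintype, Fin.prod_univ_two,
    mul_assoc]

/-- The coefficient of `y⁰` in the normal form of `P` modulo `y ^ m - φ(x)`, i.e. in the basis
`1, y, …, y ^ (m - 1)` of the coordinate ring over `R[x]`. -/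
noncomputable def xComponent (φ : R[X]) (m : ℕ) : MvPolynomial (Fin 2) R →ₗ[R] R[X] :=
  ((lcoeff R[X] 0).restrictScalars R).comp
    (((modByMonicHom (Y ^ m - C φ)).restrictScalars R).comp toBivariate.toLinearMap)

lemma xComponent_apply (φ : R[X]) (m : ℕ) (P : MvPolynomial (Fin 2) R) :
    xComponent φ m P = (toBivariate P %ₘ (Y ^ m - C φ)).coeff 0 := rfl

lemma natDegree_xComponent_monomial_le (φ : R[X]) {m : ℕ} (hm : 0 < m) (s : Fin 2 →₀ ℕ)
    (c : R) :
    (xComponent φ m (MvPolynomial.monomial s c)).natDegree ≤ s 0 + s 1 / m * φ.natDegree := by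
  nontriviality R
  rw [xComponent_apply, toBivariate_monomial, modByMonic_X_pow_sub_C_C_mul_X_pow hm,
    coeff_C_mul_X_pow]
  split_ifs
  · exact natDegree_mul_le.trans (add_le_add (natDegree_C_mul_X_pow_le _ _) natDegree_pow_le)
  · simp

lemma xComponent_eq_zero_of_mem {φ : R[X]} {m : ℕ} (hm : 0 < m) {P : MvPolynomial (Fin 2) R}
    (hP : P ∈ curveIdeal φ m) : xComponent φ m P = 0 := by
  obtain ⟨g, rfl⟩ := Ideal.mem_span_singleton'.1 hP
  rw [xComponent_apply, map_mul, map_sub, map_pow, toBivariate_X_one, toBivariate_aeval_X_zero,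
    mul_self_modByMonic (monic_X_pow_sub_C φ hm.ne'), coeff_zero]

lemma xComponent_X_zero_pow [Nontrivial R] (φ : R[X]) {m : ℕ} (hm : 0 < m) (k : ℕ) :
    xComponent φ m (MvPolynomial.X 0 ^ k) = X ^ k := by
  have h := modByMonic_X_pow_sub_C_C_mul_X_pow hm φ (X ^ k) 0
  simp only [pow_zero, mul_one, Nat.zero_div, Nat.zero_mod] at h
  rw [xComponent_apply, map_pow, toBivariate_X_zero, ← C_pow, h, coeff_C_zero]

lemma mul_natDegree_xComponent_le {φ : R[X]} {m : ℕ} (hm : 0 < m) (hmφ : m ≤ φ.natDegree)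
    (P : MvPolynomial (Fin 2) R) :
    m * (xComponent φ m P).natDegree ≤ φ.natDegree * P.totalDegree := by
  suffices h : (xComponent φ m P).natDegree ≤ φ.natDegree * P.totalDegree / m from
    (Nat.mul_le_mul_left m h).trans (Nat.mul_div_le _ _)
  conv_lhs => rw [← P.support_sum_monomial_coeff, map_sum]
  refine natDegree_sum_le_of_forall_le _ _ fun s hs => ?_
  have hdeg : s 0 + s 1 ≤ P.totalDegree := by
    simpa [Finsupp.sum_fintype, Fin.sum_univ_two] using MvPolynomial.le_totalDegree hs
  rw [Nat.le_div_iff_mul_le hm]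
  refine (Nat.mul_le_mul_right m (natDegree_xComponent_monomial_le φ hm s _)).trans ?_
  nlinarith [Nat.mul_le_mul_right (s 0) hmφ,
    Nat.mul_le_mul_right φ.natDegree (Nat.mul_div_le (s 1) m), Nat.mul_le_mul_left φ.natDegree hdeg]

theorem mul_le_totalDegree_of_X_zero_pow_sub_mem [Nontrivial R] {φ : R[X]} {m : ℕ} (hm : 0 < m)
    (hmφ : m ≤ φ.natDegree) {n : ℕ} {Q : MvPolynomial (Fin 2) R}
    (hQ : MvPolynomial.X 0 ^ (φ.natDegree * n) - Q ∈ curveIdeal φ m) :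
    m * n ≤ Q.totalDegree := by
  have hxQ : xComponent φ m Q = X ^ (φ.natDegree * n) := by
    have h := xComponent_eq_zero_of_mem hm hQ
    rwa [map_sub, xComponent_X_zero_pow φ hm, sub_eq_zero, eq_comm] at h
  have h := mul_natDegree_xComponent_le hm hmφ Q
  rw [hxQ, natDegree_X_pow, mul_left_comm] at h
  exact Nat.le_of_mul_le_mul_left h (hm.trans_le hmφ)

lemma totalDegree_aeval_X_le [Nontrivial R] {σ : Type*} (i : σ) (p : R[X]) :
    (aeval (MvPolynomial.X i : MvPolynomial σ R) p).totalDegree ≤ p.natDegree := by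
  rw [aeval_eq_sum_range]
  refine (MvPolynomial.totalDegree_finsetSum _ _).trans (Finset.sup_le fun k hk => ?_)
  refine (MvPolynomial.totalDegree_smul_le _ _).trans ((MvPolynomial.totalDegree_pow _ _).trans ?_)
  rw [MvPolynomial.totalDegree_X, mul_one]
  exact Finset.mem_range_succ_iff.1 hk

theorem exists_totalDegree_le_X_zero_pow_sub_mem {K : Type*} [Field K] {φ : K[X]} (hφ : φ ≠ 0)
    (m n : ℕ) :
    ∃ Q : MvPolynomial (Fin 2) K, Q.totalDegree ≤ n * max m (φ.natDegree - 1) ∧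
      MvPolynomial.X 0 ^ (φ.natDegree * n) - Q ∈ curveIdeal φ m := by
  set c := φ.leadingCoeff
  set L : MvPolynomial (Fin 2) K :=
    c⁻¹ • (MvPolynomial.X 1 ^ m - aeval (MvPolynomial.X 0) φ.eraseLead)
  refine ⟨L ^ n, (MvPolynomial.totalDegree_pow _ _).trans (Nat.mul_le_mul_left n ?_), ?_⟩
  · refine (MvPolynomial.totalDegree_smul_le _ _).trans
      ((MvPolynomial.totalDegree_sub _ _).trans ?_)
    rw [MvPolynomial.totalDegree_X_pow]
    exact max_le_max le_rfl ((totalDegree_aeval_X_le _ _).trans (eraseLead_natDegree_le φ))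
  · have hc : MvPolynomial.C c⁻¹ * MvPolynomial.C c = (1 : MvPolynomial (Fin 2) K) := by
      rw [← map_mul, inv_mul_cancel₀ (leadingCoeff_ne_zero.2 hφ), map_one]
    have hx : MvPolynomial.X 0 ^ φ.natDegree - L
        = MvPolynomial.C (-c⁻¹) * (MvPolynomial.X 1 ^ m - aeval (MvPolynomial.X 0) φ) := by
      conv_rhs => rw [← eraseLead_add_C_mul_X_pow φ]
      simp only [L, map_add, map_mul, aeval_C, map_pow, aeval_X, MvPolynomial.smul_eq_C_mul,
        MvPolynomial.algebraMap_eq, map_neg]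
      linear_combination (-MvPolynomial.X 0 ^ φ.natDegree) * hc
    have hmem : MvPolynomial.X 0 ^ φ.natDegree - L ∈ curveIdeal φ m :=
      hx ▸ Ideal.mul_mem_left _ _ (Ideal.subset_span rfl)
    rw [pow_mul]
    exact Ideal.mem_of_dvd _ (sub_dvd_pow_sub_pow _ _ n) hmem

end Superelliptic

theorem curve_degree_x_pow_three_n_cubic_general
    (φ : Polynomial ℝ) (hφ : φ.degree = 3) (n : ℕ) :
    (∃ Q : MvPolynomial (Fin 2) ℝ, Q.totalDegree ≤ 2 * n ∧
      (MvPolynomial.X 0 : MvPolynomial (Fin 2) ℝ) ^ (3 * n) - Q ∈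
        Ideal.span {(MvPolynomial.X 1 : MvPolynomial (Fin 2) ℝ) ^ 2 -
          Polynomial.aeval (MvPolynomial.X 0 : MvPolynomial (Fin 2) ℝ) φ}) ∧
    (∀ Q : MvPolynomial (Fin 2) ℝ,
      (MvPolynomial.X 0 : MvPolynomial (Fin 2) ℝ) ^ (3 * n) - Q ∈
        Ideal.span {(MvPolynomial.X 1 : MvPolynomial (Fin 2) ℝ) ^ 2 -
          Polynomial.aeval (MvPolynomial.X 0 : MvPolynomial (Fin 2) ℝ) φ} →
      2 * n ≤ Q.totalDegree) := by
  have hdeg : φ.natDegree = 3 := natDegree_eq_of_degree_eq_some hφ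
  have hφ0 : φ ≠ 0 := ne_zero_of_natDegree_gt (n := 0) (by omega)
  refine ⟨?_, fun Q hQ => ?_⟩
  · obtain ⟨Q, hQdeg, hQ⟩ := Superelliptic.exists_totalDegree_le_X_zero_pow_sub_mem hφ0 2 n
    rw [hdeg] at hQdeg hQ
    exact ⟨Q, by simpa [mul_comm] using hQdeg, hQ⟩
  · exact Superelliptic.mul_le_totalDegree_of_X_zero_pow_sub_mem (φ := φ) two_pos (by omega)
      (by rwa [hdeg])

/-- The minimal degree of `x^{3n}` on the cubic curve `y² = φ(x)`,
`deg φ = 3`, equals `2n`. -/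
theorem curve_degree_x_pow_three_n_cubic
    (φ : Polynomial ℝ) (hφ : φ.degree = 3) (n : ℕ) (hn : 1 ≤ n) :
    (∃ Q : MvPolynomial (Fin 2) ℝ, Q.totalDegree ≤ 2 * n ∧
      (MvPolynomial.X 0 : MvPolynomial (Fin 2) ℝ) ^ (3 * n) - Q ∈
        Ideal.span {(MvPolynomial.X 1 : MvPolynomial (Fin 2) ℝ) ^ 2 -
          Polynomial.aeval (MvPolynomial.X 0 : MvPolynomial (Fin 2) ℝ) φ}) ∧
    (∀ Q : MvPolynomial (Fin 2) ℝ,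
      (MvPolynomial.X 0 : MvPolynomial (Fin 2) ℝ) ^ (3 * n) - Q ∈
        Ideal.span {(MvPolynomial.X 1 : MvPolynomial (Fin 2) ℝ) ^ 2 -
          Polynomial.aeval (MvPolynomial.X 0 : MvPolynomial (Fin 2) ℝ) φ} →
      2 * n ≤ Q.totalDegree) :=
  curve_degree_x_pow_three_n_cubic_general φ hφ n
end

section
/- Curve-degree bound for univariate polynomials on y = φ(x) (the claim (eq:degp1) used in the proof of Proposition C1struct: deg_{γ_{1,d}}(P^{(1,d)}_{j,0}) < n+1 for j < d−1+d(n+2−d)): Suppose Polynomial.degree φ = d with d ≥ 1. Then for every s ≥ 1 and every univariate real polynomial g with Polynomial.natDegree g + 2 ≤ d + d * s, there exists Q ∈ R with totalDegree Q + 2 ≤ d + s and Polynomial.aeval x g − Q ∈ I_1. (That is, every univariate polynomial of degree at most d − 2 + d·s has minimal degree at most d − 2 + s on the curve y = φ(x).) -/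
/-!
Divide `g` by `φ` with remainder, `g = φ q + r` with `deg r < deg φ = d`. Modulo `y - φ(x)` this
gives `g ≡ y q + r`: the division trades `d` degrees in `x` for one degree in `y`, while the
remainder costs at most `d - 1`. Iterating on `q`, i.e. expanding `g` in base `φ`, each step
lowers the admissible bound `d - 2 + d s` on `deg g` to `d - 2 + d (s - 1)` and raises the
bound on the total degree by one, starting from `Q = g` when `deg g ≤ d - 2`.
-/

open Polynomial

theorem MvPolynomial.totalDegree_aeval_X_le_s18 {R σ : Type*} [CommSemiring R] (p : R[X]) (i : σ) :
    (Polynomial.aeval (MvPolynomial.X i : MvPolynomial σ R) p).totalDegree ≤ p.natDegree := by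
  rw [Polynomial.aeval_eq_sum_range]
  refine (MvPolynomial.totalDegree_finsetSum _ _).trans (Finset.sup_le fun k hk => ?_)
  calc (p.coeff k • (MvPolynomial.X i : MvPolynomial σ R) ^ k).totalDegree
      ≤ ((MvPolynomial.X i : MvPolynomial σ R) ^ k).totalDegree :=
        MvPolynomial.totalDegree_smul_le _ _
    _ ≤ k := by
      rw [MvPolynomial.X_pow_eq_monomial]
      exact (MvPolynomial.totalDegree_monomial_le _ _).trans_eq (by simp)
    _ ≤ p.natDegree := Nat.le_of_lt_succ (Finset.mem_range.mp hk)

theorem Polynomial.natDegree_div_le {K : Type*} [Field K] (p q : K[X]) :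
    (p / q).natDegree ≤ p.natDegree - q.natDegree := by
  rcases eq_or_ne q 0 with rfl | hq
  · simp
  rw [div_def]
  refine (natDegree_C_mul_le _ _).trans_eq ?_
  rw [natDegree_divByMonic _ (monic_mul_leadingCoeff_inv hq), natDegree_mul_leadingCoeff_inv _ hq]

theorem sub_dvd_mul_add_sub_mul_add {A : Type*} [CommRing A] {a b u v : A} (c : A)
    (h : b - a ∣ u - v) : b - a ∣ a * u + c - (b * v + c) := by
  have key : a * u + c - (b * v + c) = a * (u - v) - (b - a) * v := by ring
  rw [key]
  exact dvd_sub (dvd_mul_of_dvd_right h a) (dvd_mul_right _ _)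

section CurveDegree

variable {K σ : Type*} [Field K] (i j : σ) {φ : K[X]}

theorem exists_totalDegree_le_sub_dvd_of_div (hφ : φ.natDegree ≠ 0) (g : K[X])
    {Q' : MvPolynomial σ K}
    (hQ' : MvPolynomial.X j - aeval (MvPolynomial.X i) φ ∣ aeval (MvPolynomial.X i) (g / φ) - Q') :
    ∃ Q : MvPolynomial σ K, Q.totalDegree ≤ max (Q'.totalDegree + 1) (φ.natDegree - 1) ∧
      MvPolynomial.X j - aeval (MvPolynomial.X i) φ ∣ aeval (MvPolynomial.X i) g - Q := by
  refine ⟨MvPolynomial.X j * Q' + aeval (MvPolynomial.X i) (g % φ), ?_, ?_⟩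
  · have hr : (g % φ).natDegree ≤ φ.natDegree - 1 :=
      Nat.le_sub_one_of_lt (natDegree_mod_lt g hφ)
    refine (MvPolynomial.totalDegree_add _ _).trans (max_le_max ?_ <|
      (MvPolynomial.totalDegree_aeval_X_le_s18 _ i).trans hr)
    refine (MvPolynomial.totalDegree_mul _ _).trans ?_
    rw [MvPolynomial.totalDegree_X, add_comm]
  · have h := sub_dvd_mul_add_sub_mul_add (aeval (MvPolynomial.X i) (g % φ)) hQ'
    rwa [← map_mul, ← map_add, EuclideanDomain.div_add_mod] at h

theorem exists_totalDegree_le_sub_dvd (s : ℕ) (g : K[X])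
    (hg : g.natDegree + 2 ≤ φ.natDegree + φ.natDegree * s) :
    ∃ Q : MvPolynomial σ K, Q.totalDegree + 2 ≤ φ.natDegree + s ∧
      MvPolynomial.X j - aeval (MvPolynomial.X i) φ ∣ aeval (MvPolynomial.X i) g - Q := by
  induction s generalizing g with
  | zero =>
    have := MvPolynomial.totalDegree_aeval_X_le_s18 (σ := σ) g i
    exact ⟨aeval (MvPolynomial.X i) g, by omega, by rw [sub_self]; exact dvd_zero _⟩
  | succ s ih =>
    rcases lt_or_ge g.natDegree φ.natDegree with hlt | hge
    · have := MvPolynomial.totalDegree_aeval_X_le_s18 (σ := σ) g i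
      exact ⟨aeval (MvPolynomial.X i) g, by omega, by rw [sub_self]; exact dvd_zero _⟩
    have hq := natDegree_div_le g φ
    obtain ⟨Q', hQ'deg, hQ'⟩ := ih (g / φ) (by rw [mul_add_one] at hg; omega)
    have hφ : φ.natDegree ≠ 0 := by rintro h; simp [h] at hg
    obtain ⟨Q, hQdeg, hQ⟩ := exists_totalDegree_le_sub_dvd_of_div i j hφ g hQ'
    exact ⟨Q, by omega, hQ⟩

end CurveDegree

theorem curve_degree_bound_univariate_m1_general
    (d : ℕ) (φ : Polynomial ℝ) (hφ : φ.degree = d)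
    (s : ℕ) (g : Polynomial ℝ)
    (hg : g.natDegree + 2 ≤ d + d * s) :
    ∃ Q : MvPolynomial (Fin 2) ℝ, Q.totalDegree + 2 ≤ d + s ∧
      Polynomial.aeval (MvPolynomial.X 0 : MvPolynomial (Fin 2) ℝ) g - Q ∈
        Ideal.span {(MvPolynomial.X 1 : MvPolynomial (Fin 2) ℝ) ^ 1 -
          Polynomial.aeval (MvPolynomial.X 0 : MvPolynomial (Fin 2) ℝ) φ} := by
  obtain rfl := natDegree_eq_of_degree_eq_some hφ
  simpa only [pow_one, Ideal.mem_span_singleton] using exists_totalDegree_le_sub_dvd 0 1 s g hg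

/-- Curve-degree bound for univariate polynomials on `y = φ(x)`: every
univariate polynomial of degree at most `d - 2 + d·s` has minimal degree at
most `d - 2 + s` on the curve. -/
theorem curve_degree_bound_univariate_m1
    (d : ℕ) (hd : 1 ≤ d) (φ : Polynomial ℝ) (hφ : φ.degree = d)
    (s : ℕ) (hs : 1 ≤ s) (g : Polynomial ℝ)
    (hg : g.natDegree + 2 ≤ d + d * s) :
    ∃ Q : MvPolynomial (Fin 2) ℝ, Q.totalDegree + 2 ≤ d + s ∧
      Polynomial.aeval (MvPolynomial.X 0 : MvPolynomial (Fin 2) ℝ) g - Q ∈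
        Ideal.span {(MvPolynomial.X 1 : MvPolynomial (Fin 2) ℝ) ^ 1 -
          Polynomial.aeval (MvPolynomial.X 0 : MvPolynomial (Fin 2) ℝ) φ} :=
  curve_degree_bound_univariate_m1_general d φ hφ s g hg
end
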